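/- Let γ ∈ Δ and let i be the unique index with 1 ≤ i ≤ m such that τ_i ≤ γ ≤ σ_i. Then x(γ) lies in the left S-submodule of R generated by the monomials x(τ_j) with j ≥ i. -/

import Mathlib

open scoped Classical

noncomputable section

namespace SU

/-- The closed real cone spanned by the vectors `v j`, `j ∈ F`. -/
def realCone {n d : ℕ} (v : Fin d → Fin n → ℤ) (F : Finset (Fin d)) : Set (Fin n → ℝ) :=
  {x | ∃ c : Fin d → ℝ, (∀ j, 0 ≤ c j) ∧ (∀ j, j ∉ F → c j = 0) ∧
    x = ∑ j, c j • fun i => (v j i : ℝ)}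

/-- A complete nonsingular fan in `N = ℤ^n`, recorded combinatorially.  Since the
cones of a nonsingular fan are simplicial, every cone is determined by the set of
its edges; `isCone F` says that the primitive vectors `v j`, `j ∈ F`, span a cone
of the fan `Δ`.  Faces correspond to subsets, and the dimension of a cone is the
cardinality of its edge set. -/
structure Fan (n d : ℕ) where
  /-- the primitive generators of the `d` edges (1-dimensional cones) of the fan -/
  v : Fin d → Fin n → ℤ
  v_inj : Function.Injective v
  /-- `isCone F` : the `v j`, `j ∈ F`, span a cone of the fan -/
  isCone : Finset (Fin d) → Prop
  isCone_empty : isCone ∅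
  isCone_singleton : ∀ j, isCone {j}
  /-- the fan is closed under taking faces -/
  isCone_mono : ∀ {F G}, isCone F → G ⊆ F → isCone G
  /-- any two cones meet along a common face -/
  isCone_inter : ∀ {F G}, isCone F → isCone G → isCone (F ∩ G)
  realCone_inter : ∀ {F G}, isCone F → isCone G →
    realCone v F ∩ realCone v G = realCone v (F ∩ G)
  /-- the fan is complete : the union of its cones is all of `N ⊗ ℝ` -/
  complete : ∀ x : Fin n → ℝ, ∃ F, isCone F ∧ x ∈ realCone v F
  /-- nonsingularity : the generators of each cone form part of a `ℤ`-basis of `N` -/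
  unimodular : ∀ {F}, isCone F → ∃ (b : Module.Basis (Fin n) ℤ (Fin n → ℤ))
    (ι : Fin d → Fin n), Set.InjOn ι ↑F ∧ ∀ j ∈ F, b (ι j) = v j

/-- An enumeration `σ 0, …, σ (m-1)` of the `n`-dimensional cones of the fan. -/
structure MaxOrder {n d : ℕ} (Δ : Fan n d) (m : ℕ) where
  σ : Fin m → Finset (Fin d)
  isCone_σ : ∀ i, Δ.isCone (σ i)
  card_σ : ∀ i, (σ i).card = n
  σ_inj : Function.Injective σ
  σ_surj : ∀ F, Δ.isCone F → F.card = n → ∃ i, σ i = F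

/-- `τ i` : the intersection of `σ i` with those cones `σ k`, `k > i`, with
`dim (σ i ∩ σ k) = n - 1`. -/
def MaxOrder.tau {n d m : ℕ} {Δ : Fan n d} (o : MaxOrder Δ m) (i : Fin m) :
    Finset (Fin d) :=
  (o.σ i).filter fun j => ∀ k, i < k → ((o.σ i) ∩ (o.σ k)).card = n - 1 → j ∈ o.σ k

/-- Property (*) : `τ i` a face of `σ j` implies `i ≤ j`. -/
def MaxOrder.Star {n d m : ℕ} {Δ : Fan n d} (o : MaxOrder Δ m) : Prop :=
  ∀ i j, o.tau i ⊆ o.σ j → i ≤ j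

/-- the set `{1, …, n} ⊆ {1, …, d}` of the first `n` edges -/
def firstn {n d : ℕ} (hnd : n ≤ d) : Finset (Fin d) :=
  Finset.univ.map ⟨Fin.castLE hnd, Fin.castLE_injective hnd⟩

variable {n d : ℕ} (S : Type*) [Ring S]

/-- The polynomial algebra over a (possibly noncommutative) ring `S` in `d`
central, pairwise commuting, variables. -/
abbrev Poly (S : Type*) [Ring S] (d : ℕ) : Type _ := AddMonoidAlgebra S (Fin d →₀ ℕ)

/-- the variable `x j` -/
def X (j : Fin d) : Poly S d := AddMonoidAlgebra.single (Finsupp.single j 1) 1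

/-- the scalar `s ∈ S` as a polynomial -/
def Cc (s : S) : Poly S d := AddMonoidAlgebra.single 0 s

/-- The square-free monomial `∏_{j ∈ F} x j`. -/
def mon (F : Finset (Fin d)) : Poly S d :=
  AddMonoidAlgebra.single (∑ j ∈ F, Finsupp.single j 1) 1

lemma commute_X (j k : Fin d) : Commute (X S j) (X S k) := by
  show X S j * X S k = X S k * X S j
  simp only [X]
  rw [AddMonoidAlgebra.single_mul_single, AddMonoidAlgebra.single_mul_single, add_comm]

lemma commute_one_sub_X_pow (j k : Fin d) (a b : ℕ) :
    Commute ((1 - X S j) ^ a) ((1 - X S k) ^ b) :=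
  ((Commute.one_left (1 - X S k)).sub_left
    ((Commute.one_right (X S j)).sub_right (commute_X S j k))).pow_pow a b

/-- the relation (on the polynomial ring) identifying every member of `gens`
with `0`; the corresponding `RingQuot` is the quotient by the two-sided ideal
generated by `gens`. -/
def relOf (gens : Set (Poly S d)) : Poly S d → Poly S d → Prop :=
  fun p q => p ∈ gens ∧ q = 0

/-- type (i) generators : the monomials `x_{j₁} ⋯ x_{j_k}` (distinct indices)
such that `v_{j₁}, …, v_{j_k}` do not span a cone of `Δ`. -/
def gensCone (Δ : Fan n d) : Set (Poly S d) :=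
  {p | ∃ F : Finset (Fin d), ¬ Δ.isCone F ∧ p = mon S F}

/-- type (ii) generators : the elements `y i = ∑_j ⟨u i, v j⟩ x j - r i`. -/
def gensLin (Δ : Fan n d) (uu : Fin n → ((Fin n → ℤ) →ₗ[ℤ] ℤ)) (r : Fin n → S) :
    Set (Poly S d) :=
  {p | ∃ i : Fin n, p = (∑ j, (uu i (Δ.v j)) • X S j) - Cc S (r i)}

/-- the generators of the ideal `I_S` -/
def gensI (Δ : Fan n d) (uu : Fin n → ((Fin n → ℤ) →ₗ[ℤ] ℤ)) (r : Fin n → S) :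
    Set (Poly S d) :=
  gensCone S Δ ∪ gensLin S Δ uu r

/-- the ring `R = S[x₁,…,x_d]/I_S` -/
abbrev RRing (Δ : Fan n d) (uu : Fin n → ((Fin n → ℤ) →ₗ[ℤ] ℤ)) (r : Fin n → S) :
    Type _ :=
  RingQuot (relOf S (gensI S Δ uu r))

/-- the quotient map `S[x₁,…,x_d] → R` -/
def mkR (Δ : Fan n d) (uu : Fin n → ((Fin n → ℤ) →ₗ[ℤ] ℤ)) (r : Fin n → S) :
    Poly S d →+* RRing S Δ uu r :=
  RingQuot.mkRingHom _

/-- `∏_{j : ⟨u, v j⟩ > 0} (1 - x j) ^ ⟨u, v j⟩` -/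
def zPos (Δ : Fan n d) (u : (Fin n → ℤ) →ₗ[ℤ] ℤ) : Poly S d :=
  Finset.univ.noncommProd (fun j => (1 - X S j) ^ (u (Δ.v j)).toNat)
    (fun j _ k _ _ => commute_one_sub_X_pow S j k _ _)

/-- `∏_{j : ⟨u, v j⟩ < 0} (1 - x j) ^ (-⟨u, v j⟩)` -/
def zNeg (Δ : Fan n d) (u : (Fin n → ℤ) →ₗ[ℤ] ℤ) : Poly S d :=
  Finset.univ.noncommProd (fun j => (1 - X S j) ^ (-(u (Δ.v j))).toNat)
    (fun j _ k _ _ => commute_one_sub_X_pow S j k _ _)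

lemma central_commute (ru : Fin n → Sˣ)
    (hcen : ∀ i, (ru i : S) ∈ Subring.center S) (i k : Fin n) :
    Commute (ru i) (ru k) := by
  show ru i * ru k = ru k * ru i
  exact Units.ext (by simpa using (Subring.mem_center_iff.mp (hcen i) (ru k)).symm)

/-- `r(u) = ∏_i r i ^ a i` for `u = ∑ a i • u i`, the `r i` being invertible. -/
def rOf (ru : Fin n → Sˣ) (hc : ∀ i k, Commute (ru i) (ru k)) (a : Fin n → ℤ) : S :=
  (Finset.univ.noncommProd (fun i => ru i ^ a i)
    (fun i _ k _ _ => (hc i k).zpow_zpow _ _) : Sˣ)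

/-- type (ii′) generators : the elements `z(u)` for `u ∈ M` -/
def gensZ (Δ : Fan n d) (uu : Fin n → ((Fin n → ℤ) →ₗ[ℤ] ℤ)) (ru : Fin n → Sˣ)
    (hc : ∀ i k, Commute (ru i) (ru k)) : Set (Poly S d) :=
  {p | ∃ a : Fin n → ℤ, p = zPos S Δ (∑ i, a i • uu i) -
    Cc S (rOf S ru hc a) * zNeg S Δ (∑ i, a i • uu i)}

/-- the generators of the ideal `𝓘_S` -/
def gensII (Δ : Fan n d) (uu : Fin n → ((Fin n → ℤ) →ₗ[ℤ] ℤ)) (ru : Fin n → Sˣ)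
    (hc : ∀ i k, Commute (ru i) (ru k)) : Set (Poly S d) :=
  gensCone S Δ ∪ gensZ S Δ uu ru hc

/-- the ring `ℛ = S[x₁,…,x_d]/𝓘_S` -/
abbrev RcalRing (Δ : Fan n d) (uu : Fin n → ((Fin n → ℤ) →ₗ[ℤ] ℤ)) (ru : Fin n → Sˣ)
    (hc : ∀ i k, Commute (ru i) (ru k)) : Type _ :=
  RingQuot (relOf S (gensII S Δ uu ru hc))

/-- the quotient map `S[x₁,…,x_d] → ℛ` -/
def mkRcal (Δ : Fan n d) (uu : Fin n → ((Fin n → ℤ) →ₗ[ℤ] ℤ)) (ru : Fin n → Sˣ)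
    (hc : ∀ i k, Commute (ru i) (ru k)) : Poly S d →+* RcalRing S Δ uu ru hc :=
  RingQuot.mkRingHom _


/-! ### Auxiliary algebra lemmas -/

section AuxAlg

variable {n d : ℕ} (S : Type*) [Ring S]

lemma X_mul_mon (j : Fin d) (F : Finset (Fin d)) (h : j ∉ F) :
    X S j * mon S F = mon S (insert j F) := by
  simp only [X, mon, AddMonoidAlgebra.single_mul_single, one_mul, Finset.sum_insert h]

lemma Cc_mul (s t : S) : Cc S s * Cc S t = Cc (d := d) S (s * t) := by
  simp only [Cc, AddMonoidAlgebra.single_mul_single, add_zero]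

lemma Cc_zsmul (a : ℤ) (s : S) : a • Cc S s = Cc (d := d) S (a • s) := by
  simp only [Cc]
  exact AddMonoidAlgebra.smul_single a 0 s

lemma mkQuot_eq_zero {gens : Set (Poly S d)} {p : Poly S d} (h : p ∈ gens) :
    RingQuot.mkRingHom (relOf S gens) p = 0 := by
  have := RingQuot.mkRingHom_rel (r := relOf S gens) (⟨h, rfl⟩ : relOf S gens p 0)
  simpa using this

variable (Δ : Fan n d) (uu : Fin n → ((Fin n → ℤ) →ₗ[ℤ] ℤ)) (r : Fin n → S)

lemma mkR_mon_eq_zero {F : Finset (Fin d)} (h : ¬ Δ.isCone F) :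
    mkR S Δ uu r (mon S F) = 0 :=
  mkQuot_eq_zero S (Or.inl ⟨F, h, rfl⟩)

lemma mkR_lin (i : Fin n) :
    mkR S Δ uu r (∑ j, (uu i (Δ.v j)) • X S j) = mkR S Δ uu r (Cc S (r i)) := by
  have h0 : mkR S Δ uu r ((∑ j, (uu i (Δ.v j)) • X S j) - Cc S (r i)) = 0 :=
    mkQuot_eq_zero S (Or.inr ⟨i, rfl⟩)
  rw [map_sub] at h0
  exact sub_eq_zero.mp h0

end AuxAlg

section SpanPart

variable {n d m : ℕ} (S : Type*) [Ring S] (Δ : Fan n d) (o : MaxOrder Δ m)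
  (uu : Fin n → ((Fin n → ℤ) →ₗ[ℤ] ℤ)) (r : Fin n → S)

lemma Cc_add (s t : S) : Cc (d := d) S (s + t) = Cc S s + Cc S t :=
  AddMonoidAlgebra.single_add _ _ _

lemma Cc_zero : Cc (d := d) S 0 = 0 := AddMonoidAlgebra.single_zero _

lemma Cc_sum {α : Type*} (s : Finset α) (f : α → S) :
    Cc (d := d) S (∑ x ∈ s, f x) = ∑ x ∈ s, Cc S (f x) := by
  classical
  induction s using Finset.induction with
  | empty => simp [Cc_zero]
  | insert _ _ hx ih => rw [Finset.sum_insert hx, Finset.sum_insert hx, Cc_add, ih]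

lemma Cc_one : Cc (d := d) S 1 = 1 := AddMonoidAlgebra.one_def.symm

/-- `p` lies in the left `S`-submodule generated by the `x(τ_j)`, `j ≥ i`. -/
def SpanGe (i : Fin m) (p : RRing S Δ uu r) : Prop :=
  ∃ c : Fin m → S, (∀ j, j < i → c j = 0) ∧
    p = ∑ j, mkR S Δ uu r (Cc S (c j)) * mkR S Δ uu r (mon S (o.tau j))

variable {S Δ o uu r}

lemma SpanGe.zero (i : Fin m) : SpanGe S Δ o uu r i 0 :=
  ⟨0, fun _ _ => rfl, by simp [Cc_zero]⟩

lemma SpanGe.tau {i i' : Fin m} (h : i ≤ i') :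
    SpanGe S Δ o uu r i (mkR S Δ uu r (mon S (o.tau i'))) := by
  refine ⟨fun j => if j = i' then 1 else 0, fun j hj => ?_, ?_⟩
  · have : j ≠ i' := by rintro rfl; exact absurd h (not_le.mpr hj)
    simp [this]
  · rw [Finset.sum_eq_single i']
    · simp [Cc_one]
    · intro j _ hj; simp [hj, Cc_zero]
    · simp

lemma SpanGe.add {i : Fin m} {p q : RRing S Δ uu r}
    (hp : SpanGe S Δ o uu r i p) (hq : SpanGe S Δ o uu r i q) :
    SpanGe S Δ o uu r i (p + q) := by
  obtain ⟨c, hc0, rfl⟩ := hp; obtain ⟨c', hc'0, rfl⟩ := hq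
  refine ⟨c + c', fun j hj => by simp [hc0 j hj, hc'0 j hj], ?_⟩
  rw [← Finset.sum_add_distrib]
  refine Finset.sum_congr rfl fun j _ => ?_
  simp [Cc_add, map_add, add_mul]

lemma SpanGe.zsmul {i : Fin m} {p : RRing S Δ uu r} (a : ℤ)
    (hp : SpanGe S Δ o uu r i p) : SpanGe S Δ o uu r i (a • p) := by
  obtain ⟨c, hc0, rfl⟩ := hp
  refine ⟨fun j => a • c j, fun j hj => by simp [hc0 j hj], ?_⟩
  refine (Finset.smul_sum ..).trans ?_
  refine Finset.sum_congr rfl fun j _ => ?_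
  rw [← Cc_zsmul, map_zsmul, smul_mul_assoc]
  rfl

lemma SpanGe.neg {i : Fin m} {p : RRing S Δ uu r}
    (hp : SpanGe S Δ o uu r i p) : SpanGe S Δ o uu r i (-p) := by
  simpa using hp.zsmul (-1)

lemma SpanGe.sub {i : Fin m} {p q : RRing S Δ uu r}
    (hp : SpanGe S Δ o uu r i p) (hq : SpanGe S Δ o uu r i q) :
    SpanGe S Δ o uu r i (p - q) := by
  simpa [sub_eq_add_neg] using hp.add hq.neg

lemma SpanGe.cmul {i : Fin m} {p : RRing S Δ uu r} (s : S)
    (hp : SpanGe S Δ o uu r i p) :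
    SpanGe S Δ o uu r i (mkR S Δ uu r (Cc S s) * p) := by
  obtain ⟨c, hc0, rfl⟩ := hp
  refine ⟨fun j => s * c j, fun j hj => by simp [hc0 j hj], ?_⟩
  rw [Finset.mul_sum]
  refine Finset.sum_congr rfl fun j _ => ?_
  rw [← Cc_mul, map_mul, mul_assoc]

lemma SpanGe.mono {i i' : Fin m} {p : RRing S Δ uu r} (h : i ≤ i')
    (hp : SpanGe S Δ o uu r i' p) : SpanGe S Δ o uu r i p := by
  obtain ⟨c, hc0, rfl⟩ := hp
  exact ⟨c, fun j hj => hc0 j (lt_of_lt_of_le hj h), rfl⟩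

lemma SpanGe.sum {i : Fin m} {α : Type*} (T : Finset α) (f : α → RRing S Δ uu r)
    (h : ∀ j ∈ T, SpanGe S Δ o uu r i (f j)) :
    SpanGe S Δ o uu r i (∑ j ∈ T, f j) := by
  classical
  induction T using Finset.induction with
  | empty => simpa using SpanGe.zero (o := o) i
  | insert _ _ hx ih =>
    rw [Finset.sum_insert hx]
    exact (h _ (Finset.mem_insert_self _ _)).add
      (ih fun j hj => h j (Finset.mem_insert_of_mem hj))

end SpanPart

section BasisPart

variable {n d : ℕ} {hnd : n ≤ d} {Δ : Fan n d}

lemma exists_basis_firstn (h : Δ.isCone (firstn hnd)) :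
    ∃ B : Module.Basis (Fin n) ℤ (Fin n → ℤ), ∀ j : Fin n, B j = Δ.v (Fin.castLE hnd j) := by
  obtain ⟨b, ι, hinj, hb⟩ := Δ.unimodular h
  have hmem : ∀ j : Fin n, Fin.castLE hnd j ∈ firstn hnd := by
    intro j
    simp [firstn, Finset.mem_map]
  have hfinj : Function.Injective (fun j : Fin n => ι (Fin.castLE hnd j)) := by
    intro a c hac
    exact Fin.castLE_injective hnd (hinj (hmem a) (hmem c) hac)
  have hfbij := Finite.injective_iff_bijective.mp hfinj
  refine ⟨b.reindex (Equiv.ofBijective _ hfbij).symm, fun j => ?_⟩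
  rw [Module.Basis.reindex_apply, Equiv.symm_symm, Equiv.ofBijective_apply]
  exact hb _ (hmem j)

lemma u_expand (B : Module.Basis (Fin n) ℤ (Fin n → ℤ))
    (hB : ∀ j : Fin n, B j = Δ.v (Fin.castLE hnd j))
    (uu : Fin n → ((Fin n → ℤ) →ₗ[ℤ] ℤ))
    (huu : ∀ i j : Fin n, uu i (Δ.v (Fin.castLE hnd j)) = if i = j then 1 else 0)
    (u : (Fin n → ℤ) →ₗ[ℤ] ℤ) :
    u = ∑ i, (u (Δ.v (Fin.castLE hnd i))) • uu i := by
  apply B.ext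
  intro k
  rw [LinearMap.sum_apply]
  have : ∀ i, (u (Δ.v (Fin.castLE hnd i)) • uu i) (B k)
      = if i = k then u (B k) else 0 := by
    intro i
    rw [LinearMap.smul_apply, hB, huu, smul_eq_mul]
    by_cases hik : i = k
    · simp [hik, hB]
    · simp [hik]
  rw [Finset.sum_congr rfl fun i _ => this i]
  simp

variable (S : Type*) [Ring S]

lemma mkR_lin_gen (uu : Fin n → ((Fin n → ℤ) →ₗ[ℤ] ℤ)) (r : Fin n → S)
    (B : Module.Basis (Fin n) ℤ (Fin n → ℤ))
    (hB : ∀ j : Fin n, B j = Δ.v (Fin.castLE hnd j))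
    (huu : ∀ i j : Fin n, uu i (Δ.v (Fin.castLE hnd j)) = if i = j then 1 else 0)
    (u : (Fin n → ℤ) →ₗ[ℤ] ℤ) :
    mkR S Δ uu r (∑ j, (u (Δ.v j)) • X S j)
      = mkR S Δ uu r (Cc S (∑ i, (u (Δ.v (Fin.castLE hnd i))) • r i)) := by
  set a : Fin n → ℤ := fun i => u (Δ.v (Fin.castLE hnd i)) with ha
  have hu := u_expand B hB uu huu u
  have step1 : (∑ j, (u (Δ.v j)) • X S j) = ∑ i, a i • (∑ j, (uu i (Δ.v j)) • X S j) := by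
    have : ∀ j : Fin d, u (Δ.v j) = ∑ i, a i * uu i (Δ.v j) := by
      intro j
      conv_lhs => rw [hu]
      rw [LinearMap.sum_apply]
      exact Finset.sum_congr rfl fun i _ => by rw [LinearMap.smul_apply, smul_eq_mul]
    calc (∑ j, (u (Δ.v j)) • X S j)
        = ∑ j, ∑ i, (a i * uu i (Δ.v j)) • X S j := by
          refine Finset.sum_congr rfl fun j _ => ?_
          rw [this j, Finset.sum_smul]
      _ = ∑ i, a i • (∑ j, (uu i (Δ.v j)) • X S j) := by
          rw [Finset.sum_comm]
          refine Finset.sum_congr rfl fun i _ => ?_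
          rw [Finset.smul_sum]
          exact Finset.sum_congr rfl fun j _ => (mul_smul _ _ _)
  rw [step1, map_sum]
  have step2 : ∀ i, mkR S Δ uu r (a i • (∑ j, (uu i (Δ.v j)) • X S j))
      = mkR S Δ uu r (Cc S (a i • r i)) := by
    intro i
    rw [map_zsmul, mkR_lin, ← map_zsmul, Cc_zsmul]
  rw [Finset.sum_congr rfl fun i _ => step2 i, ← map_sum]
  rw [Cc_sum]

end BasisPart

/-! ### Real geometry of the fan -/

section Geometry

variable {n d : ℕ}

/-- coordinatewise cast `ℤ^n → ℝ^n` -/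
def castR (z : Fin n → ℤ) : Fin n → ℝ := fun i => (z i : ℝ)

/-- the real extension of the coordinate functional `b.coord i` -/
def coordR (b : Module.Basis (Fin n) ℤ (Fin n → ℤ)) (i : Fin n) (x : Fin n → ℝ) : ℝ :=
  ∑ l, x l * ((b.coord i) (Pi.single l 1) : ℝ)

lemma coordR_add (b : Module.Basis (Fin n) ℤ (Fin n → ℤ)) (i : Fin n) (x y : Fin n → ℝ) :
    coordR b i (x + y) = coordR b i x + coordR b i y := by
  simp [coordR, add_mul, Finset.sum_add_distrib]

lemma coordR_smul (b : Module.Basis (Fin n) ℤ (Fin n → ℤ)) (i : Fin n) (t : ℝ) (x : Fin n → ℝ) :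
    coordR b i (t • x) = t * coordR b i x := by
  simp [coordR, Finset.mul_sum, mul_assoc]

lemma coordR_sub (b : Module.Basis (Fin n) ℤ (Fin n → ℤ)) (i : Fin n) (x y : Fin n → ℝ) :
    coordR b i (x - y) = coordR b i x - coordR b i y := by
  simp [coordR, sub_mul, Finset.sum_sub_distrib]

lemma coordR_sum (b : Module.Basis (Fin n) ℤ (Fin n → ℤ)) (i : Fin n) {α : Type*}
    (s : Finset α) (f : α → Fin n → ℝ) :
    coordR b i (∑ j ∈ s, f j) = ∑ j ∈ s, coordR b i (f j) := by
  classical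
  induction s using Finset.induction with
  | empty => simp [coordR]
  | insert _ _ hx ih => rw [Finset.sum_insert hx, coordR_add, ih, Finset.sum_insert hx]

lemma coordR_castR (b : Module.Basis (Fin n) ℤ (Fin n → ℤ)) (i : Fin n) (z : Fin n → ℤ) :
    coordR b i (castR z) = ((b.coord i) z : ℝ) := by
  have hz : z = ∑ l, (z l) • Pi.single l (1 : ℤ) := by
    conv_lhs => rw [← Finset.univ_sum_single z]
    exact Finset.sum_congr rfl fun l _ => by rw [← Pi.single_smul, smul_eq_mul, mul_one]
  conv_rhs => rw [hz]
  rw [map_sum]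
  push_cast
  refine Finset.sum_congr rfl fun l _ => ?_
  rw [map_zsmul, smul_eq_mul]
  push_cast
  rfl

lemma coord_basis (b : Module.Basis (Fin n) ℤ (Fin n → ℤ)) (i i' : Fin n) :
    (b.coord i') (b i) = if i = i' then 1 else 0 := by
  rw [Module.Basis.coord_apply, Module.Basis.repr_self, Finsupp.single_apply]

lemma mem_realCone_iff {v : Fin d → Fin n → ℤ} {F : Finset (Fin d)} {x : Fin n → ℝ} :
    x ∈ realCone v F ↔
      ∃ c : Fin d → ℝ, (∀ j, 0 ≤ c j) ∧ x = ∑ j ∈ F, c j • castR (v j) := by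
  constructor
  · rintro ⟨c, h0, hsupp, rfl⟩
    refine ⟨c, h0, ?_⟩
    rw [← Finset.sum_subset (Finset.subset_univ F)
      (fun j _ hj => by rw [hsupp j hj, zero_smul])]
    rfl
  · rintro ⟨c, h0, rfl⟩
    refine ⟨fun j => if j ∈ F then c j else 0,
      fun j => by by_cases hj : j ∈ F <;> simp [hj, h0 j],
      fun j hj => if_neg hj, ?_⟩
    rw [← Finset.sum_subset (Finset.subset_univ F)
      (fun j _ hj => by simp [hj])]
    exact Finset.sum_congr rfl fun j hj => by simp only [if_pos hj]; rfl

lemma coordR_combo (b : Module.Basis (Fin n) ℤ (Fin n → ℤ)) (i₀ : Fin n)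
    {v : Fin d → Fin n → ℤ} (F : Finset (Fin d)) (c : Fin d → ℝ) :
    coordR b i₀ (∑ j ∈ F, c j • castR (v j))
      = ∑ j ∈ F, c j * ((b.coord i₀) (v j) : ℝ) := by
  rw [coordR_sum]
  exact Finset.sum_congr rfl fun j _ => by rw [coordR_smul, coordR_castR]

lemma repr_of_mem {v : Fin d → Fin n → ℤ} {G : Finset (Fin d)}
    (b : Module.Basis (Fin n) ℤ (Fin n → ℤ)) (ι : Fin d → Fin n)
    (hinj : Set.InjOn ι ↑G) (hb : ∀ j ∈ G, b (ι j) = v j) {x : Fin n → ℝ}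
    (hx : x ∈ realCone v G) :
    x = (∑ j ∈ G, coordR b (ι j) x • castR (v j)) ∧
      ∀ j₀ ∈ G, 0 ≤ coordR b (ι j₀) x := by
  obtain ⟨c, h0, hxe⟩ := mem_realCone_iff.mp hx
  have hc : ∀ j₀ ∈ G, coordR b (ι j₀) x = c j₀ := by
    intro j₀ hj₀
    rw [hxe, coordR_combo]
    rw [Finset.sum_eq_single j₀]
    · rw [← hb j₀ hj₀, coord_basis, if_pos rfl]; norm_num
    · intro j hj hne
      rw [← hb j hj, coord_basis, if_neg, Int.cast_zero, mul_zero]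
      exact fun h => hne (hinj hj hj₀ h)
    · exact fun h => absurd hj₀ h
  constructor
  · rw [Finset.sum_congr rfl fun j hj => by rw [hc j hj]]
    exact hxe
  · intro j₀ hj₀; rw [hc j₀ hj₀]; exact h0 j₀

lemma mem_realCone_of_coords {v : Fin d → Fin n → ℤ} {G : Finset (Fin d)}
    {x : Fin n → ℝ} (e : Fin d → ℝ) (he : ∀ j ∈ G, 0 ≤ e j)
    (hx : x = ∑ j ∈ G, e j • castR (v j)) : x ∈ realCone v G := by
  rw [mem_realCone_iff]
  classical
  refine ⟨fun j => if j ∈ G then e j else 0,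
    fun j => by by_cases hj : j ∈ G <;> simp [hj, he j], ?_⟩
  rw [hx]
  exact Finset.sum_congr rfl fun j hj => by simp [hj]

/-- the point `∑_{j ∈ δ} v j`, in the relative interior of the cone `δ` -/
def pointOf (v : Fin d → Fin n → ℤ) (δ : Finset (Fin d)) : Fin n → ℝ :=
  ∑ j ∈ δ, castR (v j)

lemma pointOf_mem {v : Fin d → Fin n → ℤ} (δ : Finset (Fin d)) :
    pointOf v δ ∈ realCone v δ :=
  mem_realCone_of_coords (fun _ => 1) (fun _ _ => zero_le_one)
    (by rw [pointOf]; exact Finset.sum_congr rfl fun j _ => (one_smul ℝ _).symm)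

lemma nonneg_of_interval {a β s : ℝ} (hs : 0 < s)
    (h : ∀ t, 0 < t → t ≤ s → 0 ≤ a + t * β) : 0 ≤ a := by
  by_contra hneg
  push_neg at hneg
  set t := min s (-a / (2 * (|β| + 1))) with ht
  have h1 : 0 < t := lt_min hs (div_pos (neg_pos.mpr hneg) (by positivity))
  have h2 := h t h1 (min_le_left _ _)
  have h3 : t * β ≤ t * |β| := mul_le_mul_of_nonneg_left (le_abs_self β) h1.le
  have h4 : t ≤ -a / (2 * (|β| + 1)) := min_le_right _ _
  have h5 : t * |β| ≤ (-a / (2 * (|β| + 1))) * |β| :=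
    mul_le_mul_of_nonneg_right h4 (abs_nonneg β)
  have h6 : (-a / (2 * (|β| + 1))) * |β| ≤ -a / 2 := by
    rw [div_mul_eq_mul_div, div_le_div_iff₀ (by positivity) (by norm_num)]
    nlinarith [abs_nonneg β]
  linarith

lemma realCone_convex_combo {v : Fin d → Fin n → ℤ} {F : Finset (Fin d)}
    {x y : Fin n → ℝ} {a b' : ℝ} (ha : 0 ≤ a) (hb : 0 ≤ b')
    (hx : x ∈ realCone v F) (hy : y ∈ realCone v F) :
    a • x + b' • y ∈ realCone v F := by
  obtain ⟨c, hc0, rfl⟩ := mem_realCone_iff.mp hx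
  obtain ⟨e, he0, rfl⟩ := mem_realCone_iff.mp hy
  refine mem_realCone_of_coords (fun j => a * c j + b' * e j)
    (fun j _ => add_nonneg (mul_nonneg ha (hc0 j)) (mul_nonneg hb (he0 j))) ?_
  rw [Finset.smul_sum, Finset.smul_sum, ← Finset.sum_add_distrib]
  refine Finset.sum_congr rfl fun j _ => ?_
  rw [add_smul, smul_smul, smul_smul]

lemma convex_interval_mem {v : Fin d → Fin n → ℤ} {G : Finset (Fin d)} {p w : Fin n → ℝ}
    {t1 t s : ℝ} (h2 : t1 < t) (h3 : t ≤ s) (h4 : t1 < s)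
    (hx1 : p + t1 • w ∈ realCone v G) (hxs : p + s • w ∈ realCone v G) :
    p + t • w ∈ realCone v G := by
  set θ : ℝ := (s - t)/(s - t1) with hθ
  have hθ0 : 0 ≤ θ := div_nonneg (by linarith) (by linarith)
  have hθ1 : θ ≤ 1 := by rw [hθ, div_le_one (by linarith)]; linarith
  have hne : s - t1 ≠ 0 := ne_of_gt (by linarith)
  have hcoef : θ * t1 + (1 - θ) * s = t := by
    rw [hθ]; field_simp; ring
  have hvec : θ • (p + t1 • w) + (1 - θ) • (p + s • w) = p + t • w := by
    rw [smul_add, smul_add, smul_smul, smul_smul]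
    rw [show θ • p + (θ * t1) • w + ((1-θ) • p + ((1-θ) * s) • w)
        = (θ + (1-θ)) • p + (θ * t1 + (1-θ) * s) • w by
      rw [add_smul, add_smul]; abel]
    rw [hcoef]
    norm_num
  rw [← hvec]
  exact realCone_convex_combo hθ0 (by linarith) hx1 hxs

lemma exists_cone_interval (Δ : Fan n d) (p w : Fin n → ℝ) :
    ∃ G, Δ.isCone G ∧ ∃ s : ℝ, 0 < s ∧ ∀ t : ℝ, 0 < t → t ≤ s →
      p + t • w ∈ realCone Δ.v G := by
  have hch : ∀ k : ℕ, ∃ F, Δ.isCone F ∧ p + (1/(k+1) : ℝ) • w ∈ realCone Δ.v F :=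
    fun k => Δ.complete _
  choose F hF hmem using hch
  obtain ⟨G, hG⟩ := Finite.exists_infinite_fiber F
  have hinf : (F ⁻¹' {G}).Infinite := Set.infinite_coe_iff.mp hG
  obtain ⟨k₀, hk₀⟩ := hinf.nonempty
  have hk₀' : F k₀ = G := hk₀
  refine ⟨G, ?_, 1/((k₀:ℝ)+1), ?_, ?_⟩
  · exact hk₀' ▸ hF k₀
  · positivity
  intro t ht hts
  have hxs : p + (1/((k₀:ℝ)+1)) • w ∈ realCone Δ.v G := by
    have := hmem k₀; rwa [hk₀'] at this
  rcases eq_or_lt_of_le hts with rfl | hlt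
  · exact hxs
  · obtain ⟨k, hkmem, hk⟩ := hinf.exists_gt ⌈1/t⌉₊
    have hkG : F k = G := hkmem
    have ht1pos : (0:ℝ) < 1/((k:ℝ)+1) := by positivity
    have h1 : (1:ℝ)/((k:ℝ)+1) < t := by
      rw [div_lt_iff₀ (by positivity)]
      have hle : (1:ℝ)/t ≤ (⌈1/t⌉₊ : ℝ) := Nat.le_ceil _
      have hk' : ((⌈1/t⌉₊ : ℕ) : ℝ) < (k : ℝ) + 1 := by exact_mod_cast Nat.lt_succ_of_lt hk
      have h2 : (1:ℝ)/t < (k:ℝ) + 1 := lt_of_le_of_lt hle hk'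
      calc (1:ℝ) = (1/t) * t := by field_simp
        _ < ((k:ℝ)+1) * t := mul_lt_mul_of_pos_right h2 ht
        _ = t * ((k:ℝ)+1) := mul_comm _ _
    have hx1 : p + (1/((k:ℝ)+1)) • w ∈ realCone Δ.v G := by
      have := hmem k; rwa [hkG] at this
    exact convex_interval_mem h1 hts (lt_trans h1 hlt) hx1 hxs

lemma subset_of_point_mem (Δ : Fan n d) {δ G' : Finset (Fin d)} (hδ : Δ.isCone δ)
    (hsub : G' ⊆ δ) (hp : pointOf Δ.v δ ∈ realCone Δ.v G') : δ ⊆ G' := by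
  obtain ⟨b, ι, hinj, hb⟩ := Δ.unimodular hδ
  intro j₀ hj₀
  by_contra hj₀G
  obtain ⟨c, h0, hpe⟩ := mem_realCone_iff.mp hp
  have h1 : coordR b (ι j₀) (pointOf Δ.v δ) = 1 := by
    have hrw : pointOf Δ.v δ = ∑ j ∈ δ, (1:ℝ) • castR (Δ.v j) := by
      rw [pointOf]; simp
    rw [hrw, coordR_combo]
    rw [Finset.sum_eq_single j₀]
    · rw [← hb j₀ hj₀, coord_basis, if_pos rfl]; norm_num
    · intro j hj hne
      rw [← hb j hj, coord_basis, if_neg (fun h => hne (hinj hj hj₀ h)), Int.cast_zero,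
        mul_zero]
    · exact fun h => absurd hj₀ h
  have h2 : coordR b (ι j₀) (pointOf Δ.v δ) = 0 := by
    rw [hpe, coordR_combo]
    refine Finset.sum_eq_zero fun j hj => ?_
    have hjδ : j ∈ δ := hsub hj
    have hne : j ≠ j₀ := fun h => hj₀G (h ▸ hj)
    rw [← hb j hjδ, coord_basis, if_neg (fun h => hne (hinj hjδ hj₀ h)), Int.cast_zero,
      mul_zero]
  rw [h1] at h2
  exact one_ne_zero h2

lemma subset_of_interval (Δ : Fan n d) {δ G : Finset (Fin d)} (hδ : Δ.isCone δ)
    (hG : Δ.isCone G) (w : Fin n → ℝ) {s : ℝ} (hs : 0 < s)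
    (h : ∀ t, 0 < t → t ≤ s → pointOf Δ.v δ + t • w ∈ realCone Δ.v G) : δ ⊆ G := by
  obtain ⟨b, ι, hinj, hb⟩ := Δ.unimodular hG
  set p := pointOf Δ.v δ with hp
  have hx2 := h (s/2) (by positivity) (by linarith)
  have hxs := h s hs le_rfl
  have hr2 := repr_of_mem b ι hinj hb hx2
  have hrs := repr_of_mem b ι hinj hb hxs
  set e : Fin d → ℝ := fun j =>
    2 * coordR b (ι j) (p + (s/2) • w) - coordR b (ι j) (p + s • w) with he
  have hp2 : p = (2:ℝ) • (p + (s/2) • w) - (p + s • w) := by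
    rw [smul_add, smul_smul, show (2:ℝ) * (s/2) = s by ring, two_smul]
    abel
  have hpe : p = ∑ j ∈ G, e j • castR (Δ.v j) := by
    conv_lhs => rw [hp2, hr2.1, hrs.1]
    rw [Finset.smul_sum, ← Finset.sum_sub_distrib]
    refine Finset.sum_congr rfl fun j _ => ?_
    rw [smul_smul, ← sub_smul]
  have hcoords : ∀ j₀ ∈ G, coordR b (ι j₀) p = e j₀ := by
    intro j₀ hj₀
    rw [hpe, coordR_combo, Finset.sum_eq_single j₀]
    · rw [← hb j₀ hj₀, coord_basis, if_pos rfl]; norm_num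
    · intro j hj hne
      rw [← hb j hj, coord_basis, if_neg (fun hh => hne (hinj hj hj₀ hh)), Int.cast_zero,
        mul_zero]
    · exact fun hh => absurd hj₀ hh
  have hnonneg : ∀ j₀ ∈ G, 0 ≤ e j₀ := by
    intro j₀ hj₀
    rw [← hcoords j₀ hj₀]
    refine nonneg_of_interval (β := coordR b (ι j₀) w) hs fun t ht hts => ?_
    have hxt := repr_of_mem b ι hinj hb (h t ht hts)
    have := hxt.2 j₀ hj₀
    rwa [coordR_add, coordR_smul] at this
  have hpG : p ∈ realCone Δ.v G := mem_realCone_of_coords e hnonneg hpe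
  have hpδ : p ∈ realCone Δ.v δ := pointOf_mem δ
  have hpint : p ∈ realCone Δ.v (δ ∩ G) := by
    rw [← Δ.realCone_inter hδ hG]
    exact ⟨hpδ, hpG⟩
  have := subset_of_point_mem Δ hδ (Finset.inter_subset_left) hpint
  exact fun x hx => (Finset.mem_inter.mp (this hx)).2

lemma card_cone_le (Δ : Fan n d) {F : Finset (Fin d)} (hF : Δ.isCone F) :
    F.card ≤ n := by
  obtain ⟨b, ι, hinj, hb⟩ := Δ.unimodular hF
  calc F.card ≤ (Finset.univ : Finset (Fin n)).card :=
        Finset.card_le_card_of_injOn ι (fun a _ => Finset.mem_univ _) hinj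
    _ = n := by simp

end Geometry

section Combinatorics

variable {n d : ℕ}

lemma exists_grow (Δ : Fan n d) {δ : Finset (Fin d)} (hδ : Δ.isCone δ) (hlt : δ.card < n) :
    ∃ G, Δ.isCone G ∧ δ ⊆ G ∧ δ ≠ G := by
  obtain ⟨b, ι, hinj, hb⟩ := Δ.unimodular hδ
  obtain ⟨i₀, hi₀⟩ : ∃ i₀ : Fin n, i₀ ∉ δ.image ι := by
    by_contra hcon
    push_neg at hcon
    have hsub : (Finset.univ : Finset (Fin n)) ⊆ δ.image ι := fun x _ => hcon x
    have h1 : n ≤ (δ.image ι).card := by simpa using Finset.card_le_card hsub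
    have h2 : (δ.image ι).card ≤ δ.card := Finset.card_image_le
    omega
  obtain ⟨G, hG, s, hs, hmem⟩ := exists_cone_interval Δ (pointOf Δ.v δ) (castR (b i₀))
  have hsub : δ ⊆ G := subset_of_interval Δ hδ hG _ hs hmem
  refine ⟨G, hG, hsub, ?_⟩
  rintro rfl
  have hx := hmem s hs le_rfl
  obtain ⟨c, h0, hxe⟩ := mem_realCone_iff.mp hx
  have hp0 : coordR b i₀ (pointOf Δ.v δ) = 0 := by
    have hrw : pointOf Δ.v δ = ∑ j ∈ δ, (1:ℝ) • castR (Δ.v j) := by rw [pointOf]; simp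
    rw [hrw, coordR_combo]
    refine Finset.sum_eq_zero fun j hj => ?_
    rw [← hb j hj, coord_basis, if_neg, Int.cast_zero, mul_zero]
    intro hh; exact hi₀ (hh ▸ Finset.mem_image_of_mem ι hj)
  have hz : coordR b i₀ (pointOf Δ.v δ + s • castR (b i₀)) = s := by
    rw [coordR_add, coordR_smul, coordR_castR, coord_basis, if_pos rfl, hp0]
    norm_num
  have hz2 : coordR b i₀ (pointOf Δ.v δ + s • castR (b i₀)) = 0 := by
    rw [hxe, coordR_combo]
    refine Finset.sum_eq_zero fun j hj => ?_
    rw [← hb j hj, coord_basis, if_neg, Int.cast_zero, mul_zero]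
    intro hh; exact hi₀ (hh ▸ Finset.mem_image_of_mem ι hj)
  rw [hz] at hz2
  exact absurd hz2 (ne_of_gt hs)

lemma exists_max_extend (Δ : Fan n d) (δ : Finset (Fin d)) (hδ : Δ.isCone δ) :
    ∃ G, Δ.isCone G ∧ δ ⊆ G ∧ G.card = n := by
  have H : ∀ k : ℕ, ∀ δ : Finset (Fin d), Δ.isCone δ → n - δ.card ≤ k →
      ∃ G, Δ.isCone G ∧ δ ⊆ G ∧ G.card = n := by
    intro k
    induction k with
    | zero =>
      intro δ hδ hle
      have h1 := card_cone_le Δ hδ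
      have h2 : δ.card = n := by omega
      exact ⟨δ, hδ, Finset.Subset.refl δ, h2⟩
    | succ k ih =>
      intro δ hδ hle
      rcases eq_or_lt_of_le (card_cone_le Δ hδ) with heq | hlt
      · exact ⟨δ, hδ, Finset.Subset.refl δ, heq⟩
      · obtain ⟨G, hG, hsub, hne⟩ := exists_grow Δ hδ hlt
        have hss : δ ⊂ G := ⟨hsub, fun h => hne (Finset.Subset.antisymm hsub h)⟩
        have hcard : δ.card < G.card := Finset.card_lt_card hss
        obtain ⟨G', h1, h2, h3⟩ := ih G hG (by omega)
        exact ⟨G', h1, hsub.trans h2, h3⟩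
  exact H n δ hδ (by omega)

lemma exists_opposite (Δ : Fan n d) {F : Finset (Fin d)} (hF : Δ.isCone F)
    (hcard : F.card = n) {e : Fin d} (he : e ∈ F) :
    ∃ G, Δ.isCone G ∧ G.card = n ∧ F.erase e ⊆ G ∧ e ∉ G := by
  set δ := F.erase e with hδdef
  have hδ : Δ.isCone δ := Δ.isCone_mono hF (Finset.erase_subset _ _)
  obtain ⟨b, ι, hinj, hb⟩ := Δ.unimodular hF
  obtain ⟨G₀, hG₀, s, hs, hmem⟩ := exists_cone_interval Δ (pointOf Δ.v δ) (-(castR (Δ.v e)))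
  have hsub : δ ⊆ G₀ := subset_of_interval Δ hδ hG₀ _ hs hmem
  have hcoordval : coordR b (ι e) (pointOf Δ.v δ + s • (-(castR (Δ.v e)))) = -s := by
    rw [coordR_add, coordR_smul]
    have h1 : coordR b (ι e) (-(castR (Δ.v e))) = -1 := by
      rw [show -(castR (Δ.v e)) = (-1 : ℝ) • castR (Δ.v e) by funext i; simp,
        coordR_smul, coordR_castR, ← hb e he, coord_basis, if_pos rfl]
      norm_num
    have h2 : coordR b (ι e) (pointOf Δ.v δ) = 0 := by
      have hrw : pointOf Δ.v δ = ∑ j ∈ δ, (1:ℝ) • castR (Δ.v j) := by rw [pointOf]; simp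
      rw [hrw, coordR_combo]
      refine Finset.sum_eq_zero fun j hj => ?_
      have hjF : j ∈ F := (Finset.erase_subset _ _) hj
      have hne : j ≠ e := Finset.ne_of_mem_erase hj
      rw [← hb j hjF, coord_basis, if_neg (fun hh => hne (hinj hjF he hh)), Int.cast_zero,
        mul_zero]
    rw [h1, h2]; ring
  have heG₀ : e ∉ G₀ := by
    intro heG
    have hFG : F ⊆ G₀ := by
      intro x hx
      by_cases hxe : x = e
      · exact hxe ▸ heG
      · exact hsub (Finset.mem_erase.mpr ⟨hxe, hx⟩)
    have hGF : F = G₀ :=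
      Finset.eq_of_subset_of_card_le hFG (by rw [hcard]; exact card_cone_le Δ hG₀)
    have hx := hmem s hs le_rfl
    rw [← hGF] at hx
    have hge := (repr_of_mem b ι hinj hb hx).2 e he
    rw [hcoordval] at hge
    linarith
  obtain ⟨G, hG, hsub2, hcardG⟩ := exists_max_extend Δ G₀ hG₀
  refine ⟨G, hG, hcardG, hsub.trans hsub2, ?_⟩
  intro heG
  have hFG : F ⊆ G := by
    intro x hx
    by_cases hxe : x = e
    · exact hxe ▸ heG
    · exact hsub2 (hsub (Finset.mem_erase.mpr ⟨hxe, hx⟩))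
  have hGF : F = G := Finset.eq_of_subset_of_card_le hFG (le_of_eq (by rw [hcardG, hcard]))
  have hG₀δ : G₀ ⊆ δ := by
    intro x hx
    have hxF : x ∈ F := hGF ▸ (hsub2 hx)
    exact Finset.mem_erase.mpr ⟨fun hh => heG₀ (hh ▸ hx), hxF⟩
  have hx := hmem s hs le_rfl
  obtain ⟨c, h0, hxe⟩ := mem_realCone_iff.mp hx
  have hzero : coordR b (ι e) (pointOf Δ.v δ + s • (-(castR (Δ.v e)))) = 0 := by
    rw [hxe, coordR_combo]
    refine Finset.sum_eq_zero fun j hj => ?_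
    have hjδ : j ∈ δ := hG₀δ hj
    have hjF : j ∈ F := (Finset.erase_subset _ _) hjδ
    have hne : j ≠ e := Finset.ne_of_mem_erase hjδ
    rw [← hb j hjF, coord_basis, if_neg (fun hh => hne (hinj hjF he hh)), Int.cast_zero,
      mul_zero]
  rw [hcoordval] at hzero
  have : s = 0 := by linarith
  exact absurd this (ne_of_gt hs)

lemma tau_subset {m : ℕ} {Δ : Fan n d} (o : MaxOrder Δ m) (i : Fin m) :
    o.tau i ⊆ o.σ i := Finset.filter_subset _ _

lemma exists_tau_index {m : ℕ} (Δ : Fan n d) (o : MaxOrder Δ m) {γ : Finset (Fin d)}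
    (hγ : Δ.isCone γ) :
    ∃ i : Fin m, γ ⊆ o.σ i ∧ o.tau i ⊆ γ ∧ ∀ j, γ ⊆ o.σ j → i ≤ j := by
  classical
  obtain ⟨G, hG, hsubG, hcardG⟩ := exists_max_extend Δ γ hγ
  obtain ⟨i₁, hi₁⟩ := o.σ_surj G hG hcardG
  set A : Finset (Fin m) := Finset.univ.filter (fun i => γ ⊆ o.σ i) with hA
  have hne : A.Nonempty :=
    ⟨i₁, Finset.mem_filter.mpr ⟨Finset.mem_univ _, by rw [hi₁]; exact hsubG⟩⟩
  set i := A.min' hne with hi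
  have himem : γ ⊆ o.σ i := (Finset.mem_filter.mp (A.min'_mem hne)).2
  have hmin : ∀ j, γ ⊆ o.σ j → i ≤ j := fun j hj =>
    A.min'_le j (Finset.mem_filter.mpr ⟨Finset.mem_univ _, hj⟩)
  refine ⟨i, himem, ?_, hmin⟩
  intro e hee
  by_contra heγ
  rw [MaxOrder.tau, Finset.mem_filter] at hee
  obtain ⟨heσ, hcond⟩ := hee
  obtain ⟨H, hH, hHcard, hHsub, heH⟩ := exists_opposite Δ (o.isCone_σ i) (o.card_σ i) heσ
  obtain ⟨k, hk⟩ := o.σ_surj H hH hHcard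
  have hki : k ≠ i := fun hh => heH (hk ▸ hh ▸ heσ)
  have hcardint : ((o.σ i) ∩ (o.σ k)).card = n - 1 := by
    have hint : (o.σ i) ∩ (o.σ k) = (o.σ i).erase e := by
      apply Finset.Subset.antisymm
      · intro x hx
        obtain ⟨hx1, hx2⟩ := Finset.mem_inter.mp hx
        refine Finset.mem_erase.mpr ⟨fun hh => ?_, hx1⟩
        rw [hk] at hx2
        exact heH (hh ▸ hx2)
      · intro x hx
        refine Finset.mem_inter.mpr ⟨Finset.mem_of_mem_erase hx, ?_⟩
        rw [hk]
        exact hHsub hx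
    rw [hint, Finset.card_erase_of_mem heσ, o.card_σ i]
  rcases lt_trichotomy i k with hik | hik | hik
  · exact heH (hk ▸ hcond k hik hcardint)
  · exact hki hik.symm
  · have hγk : γ ⊆ o.σ k := by
      intro x hx
      rw [hk]
      exact hHsub (Finset.mem_erase.mpr ⟨fun hh => heγ (hh ▸ hx), himem hx⟩)
    exact absurd (hmin k hγk) (not_le.mpr hik)

end Combinatorics

section Main

variable {n d m : ℕ}

lemma poly_identity (S : Type*) [Ring S] (Δ : Fan n d) {σF γ₀ : Finset (Fin d)}
    {k : Fin d} (hγσ : γ₀ ⊆ σF) (hk : k ∈ σF) (hkγ : k ∉ γ₀)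
    (u : (Fin n → ℤ) →ₗ[ℤ] ℤ)
    (hu : ∀ l ∈ σF, u (Δ.v l) = if l = k then 1 else 0) :
    (∑ j, (u (Δ.v j)) • X S j) * mon S γ₀
      = mon S (insert k γ₀)
        + ∑ j ∈ Finset.univ.filter (fun j => j ∉ σF),
            (u (Δ.v j)) • mon S (insert j γ₀) := by
  rw [Finset.sum_mul]
  rw [← Finset.sum_filter_add_sum_filter_not Finset.univ (fun j => j ∈ σF)
    (fun j => (u (Δ.v j) • X S j) * mon S γ₀)]
  congr 1
  · rw [Finset.sum_eq_single_of_mem k (Finset.mem_filter.mpr ⟨Finset.mem_univ _, hk⟩)]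
    · rw [hu k hk, if_pos rfl, one_smul, X_mul_mon S k γ₀ hkγ]
    · intro j hj hne
      rw [hu j (Finset.mem_filter.mp hj).2, if_neg hne, zero_smul, zero_mul]
  · refine Finset.sum_congr rfl fun j hj => ?_
    have hjσ : j ∉ σF := by simpa using (Finset.mem_filter.mp hj).2
    have hjγ : j ∉ γ₀ := fun hh => hjσ (hγσ hh)
    rw [smul_mul_assoc, X_mul_mon S j γ₀ hjγ]

lemma core_step (hnd : n ≤ d) (Δ : Fan n d) (o : MaxOrder Δ m) (hstar : o.Star)
    (S : Type*) [Ring S] (r : Fin n → S) (uu : Fin n → ((Fin n → ℤ) →ₗ[ℤ] ℤ))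
    (B : Module.Basis (Fin n) ℤ (Fin n → ℤ))
    (hB : ∀ j : Fin n, B j = Δ.v (Fin.castLE hnd j))
    (huu : ∀ i j : Fin n, uu i (Δ.v (Fin.castLE hnd j)) = if i = j then 1 else 0)
    (i : Fin m)
    (OIH : ∀ i' : Fin m, i < i' → ∀ γ' : Finset (Fin d), Δ.isCone γ' → o.tau i' ⊆ γ' →
      γ' ⊆ o.σ i' → SpanGe S Δ o uu r i' (mkR S Δ uu r (mon S γ'))) :
    ∀ L : ℕ, ∀ γ : Finset (Fin d), Δ.isCone γ → o.tau i ⊆ γ → γ ⊆ o.σ i → γ.card ≤ L →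
      SpanGe S Δ o uu r i (mkR S Δ uu r (mon S γ)) := by
  intro L
  induction L with
  | zero =>
    intro γ hγ h1 h2 hcard
    have hγe : γ = ∅ := Finset.card_eq_zero.mp (le_antisymm hcard (Nat.zero_le _))
    have hγτ : γ = o.tau i := by
      rw [hγe] at h1 ⊢
      exact (Finset.subset_empty.mp h1).symm
    rw [hγτ]
    exact SpanGe.tau le_rfl
  | succ L ihL =>
    intro γ hγ h1 h2 hcard
    by_cases hbase : γ ⊆ o.tau i
    · rw [Finset.Subset.antisymm hbase h1]
      exact SpanGe.tau le_rfl
    · obtain ⟨k, hkγ, hkτ⟩ : ∃ k ∈ γ, k ∉ o.tau i := by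
        by_contra hcon
        push_neg at hcon
        exact hbase fun x hx => hcon x hx
      set γ₀ := γ.erase k with hγ₀def
      have hγ₀ : Δ.isCone γ₀ := Δ.isCone_mono hγ (Finset.erase_subset _ _)
      have hτγ₀ : o.tau i ⊆ γ₀ := Finset.subset_erase.mpr ⟨h1, hkτ⟩
      have hγ₀σ : γ₀ ⊆ o.σ i := (Finset.erase_subset _ _).trans h2
      have hkσ : k ∈ o.σ i := h2 hkγ
      have hkγ₀ : k ∉ γ₀ := Finset.notMem_erase _ _
      have hins : insert k γ₀ = γ := Finset.insert_erase hkγ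
      obtain ⟨b, ι, hinj, hb⟩ := Δ.unimodular (o.isCone_σ i)
      set u : (Fin n → ℤ) →ₗ[ℤ] ℤ := b.coord (ι k) with hu_def
      have hu : ∀ l ∈ o.σ i, u (Δ.v l) = if l = k then 1 else 0 := by
        intro l hl
        rw [hu_def, ← hb l hl, coord_basis]
        by_cases hlk : l = k
        · rw [if_pos (by rw [hlk]), if_pos hlk]
        · rw [if_neg (fun hh => hlk (hinj hl hkσ hh)), if_neg hlk]
      have key := poly_identity S Δ hγ₀σ hkσ hkγ₀ u hu
      have keyR : mkR S Δ uu r (mon S γ)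
          = mkR S Δ uu r (Cc S (∑ i', (u (Δ.v (Fin.castLE hnd i'))) • r i'))
              * mkR S Δ uu r (mon S γ₀)
            - ∑ j ∈ Finset.univ.filter (fun j => j ∉ o.σ i),
                (u (Δ.v j)) • mkR S Δ uu r (mon S (insert j γ₀)) := by
        have hthis := congrArg (mkR S Δ uu r) key
        rw [map_mul, mkR_lin_gen (hnd := hnd) S uu r B hB huu u, map_add, map_sum,
          hins] at hthis
        simp only [map_zsmul] at hthis
        exact eq_sub_iff_add_eq.mpr hthis.symm
      rw [keyR]
      refine SpanGe.sub (SpanGe.cmul _ ?_) (SpanGe.sum _ _ ?_)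
      · refine ihL γ₀ hγ₀ hτγ₀ hγ₀σ ?_
        have hc1 : γ₀.card = γ.card - 1 := by
          rw [hγ₀def, Finset.card_erase_of_mem hkγ]
        have hc2 : 1 ≤ γ.card := Finset.card_pos.mpr ⟨k, hkγ⟩
        omega
      · intro j hj
        have hjσ : j ∉ o.σ i := by simpa using (Finset.mem_filter.mp hj).2
        by_cases hcone : Δ.isCone (insert j γ₀)
        · obtain ⟨i', hsub', htau', hmin'⟩ := exists_tau_index Δ o hcone
          have hτi' : o.tau i ⊆ o.σ i' :=
            (hτγ₀.trans (Finset.subset_insert _ _)).trans hsub'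
          have hii' : i ≤ i' := hstar i i' hτi'
          have hne2 : i ≠ i' := by
            rintro rfl
            exact hjσ (hsub' (Finset.mem_insert_self _ _))
          have hlt : i < i' := lt_of_le_of_ne hii' hne2
          exact SpanGe.zsmul _ (SpanGe.mono hii' (OIH i' hlt _ hcone htau' hsub'))
        · rw [mkR_mon_eq_zero S Δ uu r hcone, zsmul_zero]
          exact SpanGe.zero i

lemma main_lemma (hnd : n ≤ d) (Δ : Fan n d) (o : MaxOrder Δ m) (hstar : o.Star)
    (S : Type*) [Ring S] (r : Fin n → S) (uu : Fin n → ((Fin n → ℤ) →ₗ[ℤ] ℤ))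
    (B : Module.Basis (Fin n) ℤ (Fin n → ℤ))
    (hB : ∀ j : Fin n, B j = Δ.v (Fin.castLE hnd j))
    (huu : ∀ i j : Fin n, uu i (Δ.v (Fin.castLE hnd j)) = if i = j then 1 else 0) :
    ∀ M : ℕ, ∀ i : Fin m, m - 1 - i.val ≤ M →
      ∀ γ : Finset (Fin d), Δ.isCone γ → o.tau i ⊆ γ → γ ⊆ o.σ i →
        SpanGe S Δ o uu r i (mkR S Δ uu r (mon S γ)) := by
  intro M
  induction M with
  | zero =>
    intro i hile γ hγ h1 h2
    refine core_step hnd Δ o hstar S r uu B hB huu i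
      (fun i' hlt => ?_) γ.card γ hγ h1 h2 le_rfl
    exact absurd (Fin.lt_def.mp hlt) (by have h3 := i'.isLt; omega)
  | succ M ih =>
    intro i hile γ hγ h1 h2
    refine core_step hnd Δ o hstar S r uu B hB huu i
      (fun i' hlt γ' hγ' ht' hs' => ih i' ?_ γ' hγ' ht' hs') γ.card γ hγ h1 h2 le_rfl
    have h3 := i'.isLt
    have h4 := Fin.lt_def.mp hlt
    omega

end Main
theorem statement11 {n d m : ℕ} (hn : 1 ≤ n) (hnd : n ≤ d) (hm : 1 ≤ m)
    (Δ : Fan n d) (o : MaxOrder Δ m) (hstar : o.Star)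
    (hlast : o.σ ⟨m - 1, by omega⟩ = firstn hnd)
    (S : Type*) [Ring S] (r : Fin n → S) (hr : ∀ i, r i ∈ Subring.center S)
    (uu : Fin n → ((Fin n → ℤ) →ₗ[ℤ] ℤ))
    (huu : ∀ i j : Fin n, uu i (Δ.v (Fin.castLE hnd j)) = if i = j then 1 else 0)
    (γ : Finset (Fin d)) (hγ : Δ.isCone γ)
    (i : Fin m) (hi1 : o.tau i ⊆ γ) (hi2 : γ ⊆ o.σ i) :
    ∃ c : Fin m → S, (∀ j, j < i → c j = 0) ∧
      mkR S Δ uu r (mon S γ) =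
        ∑ j, mkR S Δ uu r (Cc S (c j)) * mkR S Δ uu r (mon S (o.tau j)) := by
  have hconeF : Δ.isCone (firstn hnd) := by rw [← hlast]; exact o.isCone_σ _
  obtain ⟨B, hB⟩ := exists_basis_firstn hconeF
  exact main_lemma hnd Δ o hstar S r uu B hB huu m i (by omega) γ hγ hi1 hi2

end SU
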